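/- arXiv:2508.20814 — 2 statements merged into one kernel-verified Lean document; each statement's English description precedes it below -/
import Mathlib

section
/- Let k be a positive integer, y > 0, X ∈ ℝ, and let f : ℝ → ℂ be continuously differentiable on [X, X + ky]. Then |y^{−k} Δ̃_y^{(k)}[f](X) − f(X)| ≤ ky · max_{x ∈ [X, X+ky]} |f'(x)|. -/
/-!
STATEMENT 17: If f is continuously differentiable on [X, X+ky], k ≥ 1, y > 0, then
|y^{-k} Δ̃_y^{(k)}[f](X) - f(X)| ≤ ky · max_{x ∈ [X, X+ky]} |f'(x)|,
where Δ̃_y f (x) = ∫_x^{x+y} f(u) du and Δ̃_y^{(k)} is the k-fold iterate.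
-/

open intervalIntegral

/-- The integral operator `Δ̃_y`, sending `f` to `x ↦ ∫_x^{x+y} f(u) du`. -/
noncomputable def intDelta (y : ℝ) (f : ℝ → ℂ) : ℝ → ℂ := fun x => ∫ u in x..(x + y), f u

lemma intDelta_key (y : ℝ) (hy : 0 < y) :
    ∀ (k : ℕ) (a : ℝ) (g : ℝ → ℂ) (c : ℂ) (C : ℝ),
      ContinuousOn g (Set.Icc a (a + k * y)) →
      (∀ u ∈ Set.Icc a (a + k * y), ‖g u - c‖ ≤ C) →
      ‖(intDelta y)^[k] g a - (y ^ k : ℝ) • c‖ ≤ y ^ k * C := by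
  intro k
  induction k with
  | zero =>
    intro a g c C _ hb
    simpa using hb a (by simp [le_refl, hy.le])
  | succ k ih =>
    intro a g c C hg hb
    have hky : (0:ℝ) ≤ k * y := by positivity
    have hsub : Set.Icc a (a + k * y) ⊆ Set.Icc a (a + (k+1 : ℕ) * y) := by
      apply Set.Icc_subset_Icc_right
      push_cast
      nlinarith
    -- interval integrability pieces
    have hint : ∀ u ∈ Set.Icc a (a + k * y), IntervalIntegrable g MeasureTheory.volume u (u + y) := by
      intro u hu
      apply ContinuousOn.intervalIntegrable
      apply hg.mono
      rw [Set.uIcc_of_le (by linarith)]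
      apply Set.Icc_subset_Icc
      · exact hu.1
      · have := hu.2; push_cast; nlinarith
    -- the bound for intDelta y g
    have hb' : ∀ u ∈ Set.Icc a (a + k * y),
        ‖intDelta y g u - (y : ℝ) • c‖ ≤ y * C := by
      intro u hu
      have h1 : intDelta y g u - (y : ℝ) • c = ∫ t in u..(u + y), (g t - c) := by
        rw [intervalIntegral.integral_sub (hint u hu) intervalIntegrable_const]
        simp [intDelta]
      rw [h1]
      have := intervalIntegral.norm_integral_le_of_norm_le_const
        (C := C) (f := fun t => g t - c) (a := u) (b := u + y) ?_
      · calc ‖∫ t in u..(u+y), (g t - c)‖ ≤ C * |u + y - u| := this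
          _ = y * C := by rw [abs_of_pos (by linarith : (0:ℝ) < u + y - u)]; ring
      · intro t ht
        rw [Set.uIoc_of_le (by linarith)] at ht
        apply hb
        constructor
        · linarith [hu.1, ht.1]
        · have := hu.2; have := ht.2; push_cast; nlinarith
    -- continuity of intDelta y g on the smaller interval
    have hcont' : ContinuousOn (intDelta y g) (Set.Icc a (a + k * y)) := by
      have hIcc : Set.uIcc a (a + (k+1:ℕ) * y) = Set.Icc a (a + (k+1:ℕ) * y) := by
        apply Set.uIcc_of_le
        push_cast
        nlinarith
      have hintall : ∀ u v, u ∈ Set.Icc a (a + (k+1:ℕ) * y) → v ∈ Set.Icc a (a + (k+1:ℕ) * y) →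
          IntervalIntegrable g MeasureTheory.volume u v := by
        intro u v hu hv
        apply ContinuousOn.intervalIntegrable
        apply hg.mono
        rw [← hIcc] at hu hv ⊢
        exact Set.uIcc_subset_uIcc hu hv
      have hF : ContinuousOn (fun x => ∫ t in a..x, g t) (Set.Icc a (a + (k+1:ℕ) * y)) := by
        rw [← hIcc]
        apply continuousOn_primitive_interval
        rw [hIcc]
        exact hg.integrableOn_Icc
      have heq : ∀ x ∈ Set.Icc a (a + k * y),
          intDelta y g x = (∫ t in a..(x + y), g t) - ∫ t in a..x, g t := by
        intro x hx
        have hx1 : x ∈ Set.Icc a (a + (k+1:ℕ) * y) := hsub hx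
        have hx2 : x + y ∈ Set.Icc a (a + (k+1:ℕ) * y) := by
          constructor
          · linarith [hx.1]
          · have := hx.2; push_cast; nlinarith
        have ha : a ∈ Set.Icc a (a + (k+1:ℕ) * y) := by
          constructor
          · exact le_rfl
          · push_cast; nlinarith
        have := intervalIntegral.integral_add_adjacent_intervals
          (hintall a x ha hx1) (hintall x (x+y) hx1 hx2)
        simp only [intDelta]
        rw [← this]
        abel
      have hc2 : ContinuousOn
          (fun x => (∫ t in a..(x + y), g t) - ∫ t in a..x, g t)
          (Set.Icc a (a + k * y)) := by
        apply ContinuousOn.sub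
        · apply hF.comp (by fun_prop)
          intro x hx
          simp only [Set.mem_Icc] at hx ⊢
          obtain ⟨h1, h2⟩ := hx
          constructor
          · linarith
          · push_cast
            push_cast at h2
            nlinarith
        · exact hF.mono hsub
      exact hc2.congr heq
    have := ih a (intDelta y g) ((y:ℝ) • c) (y * C) hcont' hb'
    rw [Function.iterate_succ_apply]
    calc ‖(intDelta y)^[k] (intDelta y g) a - (y ^ (k+1) : ℝ) • c‖
        = ‖(intDelta y)^[k] (intDelta y g) a - (y ^ k : ℝ) • ((y:ℝ) • c)‖ := by
          rw [smul_smul, pow_succ]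
      _ ≤ y ^ k * (y * C) := this
      _ = y ^ (k+1) * C := by ring

theorem intDelta_iter_approx (k : ℕ) (hk : 0 < k) (y : ℝ) (hy : 0 < y) (X : ℝ)
    (f f' : ℝ → ℂ)
    (hderiv : ∀ x ∈ Set.Icc X (X + k * y),
      HasDerivWithinAt f (f' x) (Set.Icc X (X + k * y)) x)
    (hcont : ContinuousOn f' (Set.Icc X (X + k * y))) :
    ‖(y ^ k)⁻¹ • (intDelta y)^[k] f X - f X‖
      ≤ (k * y) * ⨆ x ∈ Set.Icc X (X + k * y), ‖f' x‖ := by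
  set s := Set.Icc X (X + k * y) with hs
  have hky : (0:ℝ) < k * y := by positivity
  have hXs : X ∈ s := by constructor <;> simp <;> linarith
  set M : ℝ := ⨆ x ∈ s, ‖f' x‖ with hM
  have hbdd : BddAbove ((fun x => ‖f' x‖) '' s) :=
    (isCompact_Icc.image_of_continuousOn (hcont.norm)).bddAbove
  have hbdd' : BddAbove (Set.range fun i : s => ‖f' i‖) := by
    rwa [Set.image_eq_range] at hbdd
  have hsne : s.Nonempty := ⟨X, hXs⟩
  have h0le : sSup (∅ : Set ℝ) ≤ ⨆ i : s, ‖f' i‖ := by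
    rw [Real.sSup_empty]
    exact le_trans (norm_nonneg (f' X)) (le_ciSup hbdd' ⟨X, hXs⟩)
  have hMeq : M = sSup ((fun x => ‖f' x‖) '' s) := by
    rw [hM, csSup_image hbdd' h0le]
  have hle : ∀ x ∈ s, ‖f' x‖ ≤ M := by
    intro x hx
    rw [hMeq]
    exact le_csSup hbdd ⟨x, hx, rfl⟩
  have hM0 : 0 ≤ M := le_trans (norm_nonneg _) (hle X hXs)
  have hfc : ContinuousOn f s := fun x hx => (hderiv x hx).continuousWithinAt
  have hb : ∀ u ∈ s, ‖f u - f X‖ ≤ M * (k * y) := by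
    intro u hu
    have := Convex.norm_image_sub_le_of_norm_hasDerivWithin_le
      hderiv hle (convex_Icc _ _) hXs hu
    calc ‖f u - f X‖ ≤ M * ‖u - X‖ := this
      _ ≤ M * (k * y) := by
          apply mul_le_mul_of_nonneg_left _ hM0
          rw [Real.norm_eq_abs, abs_of_nonneg (by linarith [hu.1])]
          linarith [hu.2]
  have key := intDelta_key y hy k X f (f X) (M * (k * y)) hfc hb
  have hyk : (0:ℝ) < y ^ k := by positivity
  have : (y ^ k)⁻¹ • (intDelta y)^[k] f X - f X
      = (y ^ k)⁻¹ • ((intDelta y)^[k] f X - (y ^ k : ℝ) • f X) := by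
    rw [smul_sub, smul_smul, inv_mul_cancel₀ (ne_of_gt hyk), one_smul]
  rw [this, norm_smul, Real.norm_eq_abs, abs_of_pos (by positivity)]
  calc (y ^ k)⁻¹ * ‖(intDelta y)^[k] f X - (y ^ k : ℝ) • f X‖
      ≤ (y ^ k)⁻¹ * (y ^ k * (M * (k * y))) := by
        apply mul_le_mul_of_nonneg_left key (by positivity)
    _ = (k * y) * M := by field_simp
end

section
/- Let N : ℝ_{≥0} → ℝ be a nondecreasing locally integrable function, let k be a positive integer and y > 0. Then for every X ≥ 0, A^0_N(X) ≤ y^{−k} Δ_y^{(k)}[A^k_N](X) ≤ A^0_N(X + ky), where A^0_N = N. -/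
/-- The finite difference operator `Δ_y` (real-valued version). -/
def diffDeltaR (y : ℝ) (f : ℝ → ℝ) : ℝ → ℝ := fun x => f (x + y) - f x

/-- The k-fold smoothing `A^k_N` of `N`; `A⁰_N = N`. -/
noncomputable def smoothA (N : ℝ → ℝ) : ℕ → ℝ → ℝ
  | 0 => N
  | k + 1 => fun X => ∫ x in (0:ℝ)..X, smoothA N k x

/-!
Since `Δ_y` turns a primitive `∫₀^X f` into the window integral `∫_X^{X+y} f`, and commutes with
taking window integrals, `Δ_y^{(k)} A^k_N (X)` is the window integral over `[X, X + y]` of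
`Δ_y^{(k-1)} A^{k-1}_N`. By induction it is thus squeezed between `y^k N(X)` and `y^k N(X + ky)`
when `N` is nondecreasing. A nondecreasing `N` on `[0, ∞)` is first extended to a nondecreasing
function on `ℝ`, which changes neither side for `X ≥ 0`.
-/

open MeasureTheory Set intervalIntegral

section DifferenceOperator

variable {f : ℝ → ℝ} {y : ℝ}

lemma intervalIntegrable_comp_add_right_of_forall
    (hf : ∀ a b, IntervalIntegrable f volume a b) (c a b : ℝ) :
    IntervalIntegrable (fun t => f (t + c)) volume a b := by
  simpa using (hf (a + c) (b + c)).comp_add_right c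

lemma intervalIntegrable_diffDeltaR (hf : ∀ a b, IntervalIntegrable f volume a b) (a b : ℝ) :
    IntervalIntegrable (diffDeltaR y f) volume a b :=
  (intervalIntegrable_comp_add_right_of_forall hf y a b).sub (hf a b)

lemma intervalIntegrable_iterate_diffDeltaR (hf : ∀ a b, IntervalIntegrable f volume a b)
    (k : ℕ) (a b : ℝ) : IntervalIntegrable ((diffDeltaR y)^[k] f) volume a b := by
  induction k generalizing f with
  | zero => exact hf a b
  | succ k ih => exact ih (intervalIntegrable_diffDeltaR hf)

lemma diffDeltaR_primitive (hf : ∀ a b, IntervalIntegrable f volume a b) :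
    diffDeltaR y (fun X => ∫ t in (0 : ℝ)..X, f t) = fun x => ∫ t in x..x + y, f t :=
  funext fun x => integral_interval_sub_left (hf 0 (x + y)) (hf 0 x)

lemma diffDeltaR_window (hf : ∀ a b, IntervalIntegrable f volume a b) :
    diffDeltaR y (fun x => ∫ t in x..x + y, f t) =
      fun x => ∫ t in x..x + y, diffDeltaR y f t := by
  funext x
  simp only [diffDeltaR]
  rw [integral_sub (intervalIntegrable_comp_add_right_of_forall hf y x (x + y)) (hf x (x + y)),
    integral_comp_add_right]

lemma iterate_diffDeltaR_window (hf : ∀ a b, IntervalIntegrable f volume a b) (k : ℕ) :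
    (diffDeltaR y)^[k] (fun x => ∫ t in x..x + y, f t) =
      fun x => ∫ t in x..x + y, (diffDeltaR y)^[k] f t := by
  induction k generalizing f with
  | zero => rfl
  | succ k ih =>
    rw [Function.iterate_succ_apply, diffDeltaR_window hf, ih (intervalIntegrable_diffDeltaR hf),
      Function.iterate_succ_apply]

end DifferenceOperator

section Smoothing

variable {N : ℝ → ℝ} {y : ℝ}

lemma intervalIntegrable_smoothA (hN : ∀ a b, IntervalIntegrable N volume a b) :
    ∀ (k : ℕ) (a b : ℝ), IntervalIntegrable (smoothA N k) volume a b
  | 0 => hN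
  | k + 1 => (continuous_primitive (intervalIntegrable_smoothA hN k) 0).intervalIntegrable

lemma iterate_diffDeltaR_smoothA_succ (hN : ∀ a b, IntervalIntegrable N volume a b) (k : ℕ) :
    (diffDeltaR y)^[k + 1] (smoothA N (k + 1)) =
      fun x => ∫ t in x..x + y, (diffDeltaR y)^[k] (smoothA N k) t := by
  rw [Function.iterate_succ_apply, smoothA, diffDeltaR_primitive (intervalIntegrable_smoothA hN k),
    iterate_diffDeltaR_window (intervalIntegrable_smoothA hN k)]

variable (hN : Monotone N) (hy : 0 ≤ y)
include hN hy

lemma mul_le_iterate_diffDeltaR_smoothA (k : ℕ) (X : ℝ) :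
    y ^ k * N X ≤ (diffDeltaR y)^[k] (smoothA N k) X := by
  induction k generalizing X with
  | zero => simp [smoothA]
  | succ k ih =>
    have hint := intervalIntegrable_iterate_diffDeltaR (y := y)
      (intervalIntegrable_smoothA (fun _ _ => hN.intervalIntegrable) k) k X (X + y)
    rw [iterate_diffDeltaR_smoothA_succ (fun _ _ => hN.intervalIntegrable)]
    calc y ^ (k + 1) * N X = ∫ _ in X..X + y, y ^ k * N X := by
          simp only [intervalIntegral.integral_const, add_sub_cancel_left, smul_eq_mul]; ring
      _ ≤ ∫ t in X..X + y, (diffDeltaR y)^[k] (smoothA N k) t :=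
        integral_mono_on (by linarith) intervalIntegrable_const hint fun t ht =>
          (mul_le_mul_of_nonneg_left (hN ht.1) (by positivity)).trans (ih t)

lemma iterate_diffDeltaR_smoothA_le_mul (k : ℕ) (X : ℝ) :
    (diffDeltaR y)^[k] (smoothA N k) X ≤ y ^ k * N (X + k * y) := by
  induction k generalizing X with
  | zero => simp [smoothA]
  | succ k ih =>
    have hint := intervalIntegrable_iterate_diffDeltaR (y := y)
      (intervalIntegrable_smoothA (fun _ _ => hN.intervalIntegrable) k) k X (X + y)
    rw [iterate_diffDeltaR_smoothA_succ (fun _ _ => hN.intervalIntegrable)]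
    calc ∫ t in X..X + y, (diffDeltaR y)^[k] (smoothA N k) t
        ≤ ∫ _ in X..X + y, y ^ k * N (X + (k + 1 : ℕ) * y) :=
          integral_mono_on (by linarith) hint intervalIntegrable_const fun t ht =>
            (ih t).trans (mul_le_mul_of_nonneg_left (hN (by push_cast; linarith [ht.2]))
              (by positivity))
      _ = y ^ (k + 1) * N (X + (k + 1 : ℕ) * y) := by
        simp only [intervalIntegral.integral_const, add_sub_cancel_left, smul_eq_mul]; ring

end Smoothing

lemma smoothA_eqOn_Ici {N M : ℝ → ℝ} (h : EqOn N M (Ici 0)) :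
    ∀ k, EqOn (smoothA N k) (smoothA M k) (Ici 0)
  | 0 => h
  | k + 1 => fun X (hX : 0 ≤ X) => integral_congr fun t ht =>
      smoothA_eqOn_Ici h k (by rw [uIcc_of_le hX] at ht; exact ht.1)

lemma iterate_diffDeltaR_eqOn_Ici {f g : ℝ → ℝ} {y : ℝ} (hy : 0 ≤ y) (h : EqOn f g (Ici 0))
    (k : ℕ) : EqOn ((diffDeltaR y)^[k] f) ((diffDeltaR y)^[k] g) (Ici 0) := by
  induction k generalizing f g with
  | zero => exact h
  | succ k ih =>
    refine ih fun x (hx : 0 ≤ x) => ?_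
    simp only [diffDeltaR, h hx, h (show 0 ≤ x + y by positivity)]

theorem smoothA_unsmoothing_general (N : ℝ → ℝ) (hmono : MonotoneOn N (Set.Ici 0))
    (k : ℕ) (y : ℝ) (hy : 0 < y) (X : ℝ) (hX : 0 ≤ X) :
    N X ≤ (y ^ k)⁻¹ * (diffDeltaR y)^[k] (smoothA N k) X ∧
      (y ^ k)⁻¹ * (diffDeltaR y)^[k] (smoothA N k) X ≤ N (X + k * y) := by
  set M : ℝ → ℝ := fun x => N (max x 0)
  have hM : Monotone M := fun a b hab =>
    hmono (le_max_right a 0) (le_max_right b 0) (max_le_max_right 0 hab)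
  have hMN : EqOn M N (Ici 0) := fun x (hx : 0 ≤ x) => congrArg N (max_eq_left hx)
  rw [← iterate_diffDeltaR_eqOn_Ici hy.le (smoothA_eqOn_Ici hMN k) k hX, ← hMN hX,
    ← hMN (show 0 ≤ X + k * y by positivity), le_inv_mul_iff₀ (by positivity),
    inv_mul_le_iff₀ (by positivity)]
  exact ⟨mul_le_iterate_diffDeltaR_smoothA hM hy.le k X,
    iterate_diffDeltaR_smoothA_le_mul hM hy.le k X⟩

theorem smoothA_unsmoothing (N : ℝ → ℝ) (hmono : MonotoneOn N (Set.Ici 0))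
    (hint : MeasureTheory.LocallyIntegrableOn N (Set.Ici 0))
    (k : ℕ) (hk : 0 < k) (y : ℝ) (hy : 0 < y) (X : ℝ) (hX : 0 ≤ X) :
    N X ≤ (y ^ k)⁻¹ * (diffDeltaR y)^[k] (smoothA N k) X ∧
      (y ^ k)⁻¹ * (diffDeltaR y)^[k] (smoothA N k) X ≤ N (X + k * y) :=
  smoothA_unsmoothing_general N hmono k y hy X hX
end
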